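/- Let k ∈ (0,2π) with k ≠ π. Define E(k) := 4 − 4cos(k/2) if k ∈ (0,π) and E(k) := 4 + 4cos(k/2) if k ∈ (π,2π), and define f_k(λ) := (λ−4)(cos k − 1) − sin k·√(λ(8−λ)) for k ∈ (0,π), and f_k(λ) := (λ−4)(cos k − 1) + sin k·√(λ(8−λ)) for k ∈ (π,2π). Then for every λ ∈ [0, E(k)) and every x ∈ [0,λ]: if k ∈ (0,π) then h_{k,−}(x) + h_{k,−}(λ−x) ≥ f_k(λ), and if k ∈ (π,2π) then h_{k,+}(x) + h_{k,+}(λ−x) ≥ f_k(λ); moreover in both cases equality holds at x = λ/2, so f_k(λ) is the minimum of the corresponding sum over x ∈ [0,λ]. -/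
import Mathlib


noncomputable section

/-- h_{k,−}(x) := 2 + (x−2)cos k − sin k·√(x(4−x)) − x. -/
def hMinus (k x : ℝ) : ℝ :=
  2 + (x - 2) * Real.cos k - Real.sin k * Real.sqrt (x * (4 - x)) - x

/-- h_{k,+}(x) := 2 + (x−2)cos k + sin k·√(x(4−x)) − x. -/
def hPlus (k x : ℝ) : ℝ :=
  2 + (x - 2) * Real.cos k + Real.sin k * Real.sqrt (x * (4 - x)) - x

/-- E(k) := 4 − 4cos(k/2) for k ∈ (0,π), and 4 + 4cos(k/2) for k ∈ (π,2π). -/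
def EWvN (k : ℝ) : ℝ :=
  if k < Real.pi then 4 - 4 * Real.cos (k / 2) else 4 + 4 * Real.cos (k / 2)

/-- f_k(λ) := (λ−4)(cos k − 1) ∓ sin k·√(λ(8−λ)), with − for k ∈ (0,π) and + for k ∈ (π,2π). -/
def fWvN (k lam : ℝ) : ℝ :=
  if k < Real.pi then (lam - 4) * (Real.cos k - 1) - Real.sin k * Real.sqrt (lam * (8 - lam))
  else (lam - 4) * (Real.cos k - 1) + Real.sin k * Real.sqrt (lam * (8 - lam))

lemma sqrt_sum_le {lam x : ℝ} (hx0 : 0 ≤ x) (hxl : x ≤ lam) (hl4 : lam ≤ 4) :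
    Real.sqrt (x * (4 - x)) + Real.sqrt ((lam - x) * (4 - (lam - x)))
      ≤ Real.sqrt (lam * (8 - lam)) := by
  set a := Real.sqrt (x * (4 - x)) with ha_def
  set b := Real.sqrt ((lam - x) * (4 - (lam - x))) with hb_def
  have ha0 : 0 ≤ a := Real.sqrt_nonneg _
  have hb0 : 0 ≤ b := Real.sqrt_nonneg _
  have ha : a ^ 2 = x * (4 - x) := Real.sq_sqrt (by nlinarith)
  have hb : b ^ 2 = (lam - x) * (4 - (lam - x)) := Real.sq_sqrt (by nlinarith)
  refine (Real.le_sqrt (add_nonneg ha0 hb0) (by nlinarith)).2 ?_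
  nlinarith [sq_nonneg (a - b), sq_nonneg (2 * x - lam)]

lemma sqrt_half (lam : ℝ) :
    Real.sqrt (lam * (8 - lam)) = 2 * Real.sqrt ((lam / 2) * (4 - lam / 2)) := by
  have h : lam * (8 - lam) = 4 * ((lam / 2) * (4 - lam / 2)) := by ring
  rw [h, Real.sqrt_mul (by norm_num : (0:ℝ) ≤ 4),
    show Real.sqrt 4 = 2 by
      rw [show (4:ℝ) = 2 ^ 2 by norm_num, Real.sqrt_sq (by norm_num : (0:ℝ) ≤ 2)]]

/-- For every λ ∈ [0, E(k)) and x ∈ [0,λ], the sum h_{k,∓}(x) + h_{k,∓}(λ−x)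
is bounded below by f_k(λ), with equality at x = λ/2; so f_k(λ) is the minimum over [0,λ]. -/
theorem h_sum_min (k : ℝ) (hk0 : 0 < k) (hk2 : k < 2 * Real.pi) (hkpi : k ≠ Real.pi) :
    ∀ lam ∈ Set.Ico 0 (EWvN k),
      (∀ x ∈ Set.Icc 0 lam,
        (k < Real.pi → hMinus k x + hMinus k (lam - x) ≥ fWvN k lam) ∧
        (Real.pi < k → hPlus k x + hPlus k (lam - x) ≥ fWvN k lam)) ∧
      (k < Real.pi → hMinus k (lam / 2) + hMinus k (lam - lam / 2) = fWvN k lam) ∧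
      (Real.pi < k → hPlus k (lam / 2) + hPlus k (lam - lam / 2) = fWvN k lam) := by
  intro lam ⟨hlam0, hlamE⟩
  have hl4 : lam ≤ 4 := by
    unfold EWvN at hlamE
    by_cases hk : k < Real.pi
    · rw [if_pos hk] at hlamE
      have : 0 < Real.cos (k / 2) := by
        apply Real.cos_pos_of_mem_Ioo
        constructor <;> [linarith [Real.pi_pos]; linarith]
      linarith
    · rw [if_neg hk] at hlamE
      have hkgt : Real.pi < k := lt_of_le_of_ne (not_lt.1 hk) (Ne.symm hkpi)
      have : Real.cos (k / 2) < 0 := by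
        apply Real.cos_neg_of_pi_div_two_lt_of_lt <;> linarith
      linarith
  refine ⟨?_, ?_, ?_⟩
  · intro x ⟨hx0, hxl⟩
    have hab := sqrt_sum_le hx0 hxl hl4
    constructor
    · intro hk
      have hsin : 0 < Real.sin k := Real.sin_pos_of_pos_of_lt_pi hk0 hk
      unfold hMinus fWvN
      rw [if_pos hk]
      nlinarith [mul_le_mul_of_nonneg_left hab hsin.le]
    · intro hk
      have hk' : ¬ k < Real.pi := not_lt.2 hk.le
      have hsin : Real.sin k < 0 := by
        have h1 : 0 < Real.sin (k - Real.pi) :=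
          Real.sin_pos_of_pos_of_lt_pi (by linarith) (by linarith)
        rw [Real.sin_sub_pi] at h1
        linarith
      unfold hPlus fWvN
      rw [if_neg hk']
      nlinarith [mul_le_mul_of_nonpos_left hab hsin.le]
  · intro hk
    unfold hMinus fWvN
    rw [if_pos hk, show lam - lam / 2 = lam / 2 by ring, sqrt_half]
    ring
  · intro hk
    have hk' : ¬ k < Real.pi := not_lt.2 hk.le
    unfold hPlus fWvN
    rw [if_neg hk', show lam - lam / 2 = lam / 2 by ring, sqrt_half]
    ring
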